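/- arXiv:2012.05266 — 13 statements merged into one kernel-verified Lean document; each statement's English description precedes it below -/
import Mathlib

section
/- Let all parameters be positive reals with ε ∈ (0,1), L = log₂(1/ε), and suppose D := d·m₀·n₀² + 2κLω − 2L·m₀·n₀·ω > 0. Then for every γ with 0 < γ < γ̃ = 4κL·m₀·ω/D, the derivative of the network-only cost satisfies C_N′(γ) < 0. -/
/-!
Differentiating, `C_N'(γ) = θ / (n₀ γ³) · (γ D - 4κLm₀ω)`; the prefactor is positive, and the
bracket is negative exactly when `γ < γ̃`.
-/

theorem hasDerivAt_networkCost {m₀ n₀ d κ ω θ L γ : ℝ} (hn : n₀ ≠ 0) (hγ : γ ≠ 0) :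
    HasDerivAt (fun x => 2*ω*θ*(m₀/x - 1)*((1 + κ/(n₀*x))*L) + θ*(m₀ - m₀/x)*n₀*d)
      (θ / (n₀ * γ^3) * (γ * (d*m₀*n₀^2 + 2*κ*L*ω - 2*L*m₀*n₀*ω) - 4*κ*L*m₀*ω)) γ := by
  have hdiv (c : ℝ) : HasDerivAt (fun x => c / x) (-c / γ^2) γ := by
    simpa [div_eq_mul_inv] using (hasDerivAt_inv hγ).const_mul c
  have hnx : HasDerivAt (fun x => κ / (n₀ * x)) (-(κ / n₀) / γ^2) γ := by
    simpa only [div_mul_eq_div_div_swap, div_div_eq_mul_div, div_right_comm κ n₀] using hdiv (κ / n₀)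
  refine ((((hdiv m₀).sub_const 1).const_mul (2*ω*θ)).mul
    ((hnx.const_add 1).mul_const L)).add ((((hdiv m₀).const_sub m₀).const_mul θ).mul_const n₀
      |>.mul_const d) |>.congr_deriv ?_
  field_simp
  ring

theorem stmt2_general (m₀ n₀ d κ ω θ L : ℝ)
    (hn : 0 < n₀) (hθ : 0 < θ)
    (C_N : ℝ → ℝ)
    (hC : C_N = fun γ => 2*ω*θ*(m₀/γ - 1)*((1 + κ/(n₀*γ))*L) + θ*(m₀ - m₀/γ)*n₀*d)
    (hD : 0 < d*m₀*n₀^2 + 2*κ*L*ω - 2*L*m₀*n₀*ω) :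
    ∀ γ : ℝ, 0 < γ → γ < 4*κ*L*m₀*ω / (d*m₀*n₀^2 + 2*κ*L*ω - 2*L*m₀*n₀*ω) → deriv C_N γ < 0 := by
  intro γ hγ hγlt
  have hbracket := (lt_div_iff₀ hD).mp hγlt
  rw [hC, (hasDerivAt_networkCost hn.ne' hγ.ne').deriv]
  exact mul_neg_of_pos_of_neg (by positivity) (by linarith)

theorem stmt2 (m₀ n₀ d κ ω θ ε L : ℝ)
    (hm : 1 < m₀) (hn : 0 < n₀) (hd : 0 < d) (hκ : 0 < κ) (hω : 0 < ω) (hθ : 0 < θ)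
    (hε : 0 < ε) (hε1 : ε < 1) (hL : L = Real.logb 2 (1/ε))
    (C_N : ℝ → ℝ)
    (hC : C_N = fun γ => 2*ω*θ*(m₀/γ - 1)*((1 + κ/(n₀*γ))*L) + θ*(m₀ - m₀/γ)*n₀*d)
    (hD : 0 < d*m₀*n₀^2 + 2*κ*L*ω - 2*L*m₀*n₀*ω) :
    ∀ γ : ℝ, 0 < γ → γ < 4*κ*L*m₀*ω / (d*m₀*n₀^2 + 2*κ*L*ω - 2*L*m₀*n₀*ω) → deriv C_N γ < 0 :=
  stmt2_general m₀ n₀ d κ ω θ L hn hθ C_N hC hD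
end

section
/- Let all parameters be positive reals with ε ∈ (0,1), L = log₂(1/ε), and suppose D := d·m₀·n₀² + 2κLω − 2L·m₀·n₀·ω > 0. Then for every γ > γ̃ = 4κL·m₀·ω/D, the derivative of the network-only cost satisfies C_N′(γ) > 0. -/
open Real Set Filter

theorem stmt3 (m₀ n₀ d κ ω θ ε L : ℝ)
    (hm : 1 < m₀) (hn : 0 < n₀) (hd : 0 < d) (hκ : 0 < κ) (hω : 0 < ω) (hθ : 0 < θ)
    (hε : 0 < ε) (hε1 : ε < 1) (hL : L = Real.logb 2 (1/ε))
    (C_N : ℝ → ℝ)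
    (hC : C_N = fun γ => 2*ω*θ*(m₀/γ - 1)*((1 + κ/(n₀*γ))*L) + θ*(m₀ - m₀/γ)*n₀*d)
    (hD : 0 < d*m₀*n₀^2 + 2*κ*L*ω - 2*L*m₀*n₀*ω) :
    ∀ γ : ℝ, 4*κ*L*m₀*ω / (d*m₀*n₀^2 + 2*κ*L*ω - 2*L*m₀*n₀*ω) < γ → 0 < deriv C_N γ := by
  intro γ hγ
  have hL0 : 0 < L := by
    rw [hL]
    apply Real.logb_pos one_lt_two
    rw [one_div]
    exact (one_lt_inv₀ hε).2 hε1
  have hm0 : 0 < m₀ := lt_trans one_pos hm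
  have hγ0 : 0 < γ := by
    refine lt_trans ?_ hγ
    positivity
  have hne : γ ≠ 0 := ne_of_gt hγ0
  have key : 4*κ*L*m₀*ω < γ * (d*m₀*n₀^2 + 2*κ*L*ω - 2*L*m₀*n₀*ω) := by
    rw [div_lt_iff₀ hD] at hγ
    linarith
  have hinv : HasDerivAt (fun x : ℝ => x⁻¹) (-(γ^2)⁻¹) γ := hasDerivAt_inv hne
  have h1 : HasDerivAt (fun x : ℝ => m₀ / x) (m₀ * -(γ^2)⁻¹) γ := by
    simpa [div_eq_mul_inv] using hinv.const_mul m₀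
  have h2 : HasDerivAt (fun x : ℝ => κ / (n₀ * x)) (κ / n₀ * -(γ^2)⁻¹) γ := by
    have := hinv.const_mul (κ / n₀)
    refine this.congr_of_eventuallyEq ?_
    filter_upwards with x
    rw [div_mul_eq_div_div]
    ring
  have hB : HasDerivAt (fun x : ℝ => (1 + κ / (n₀ * x)) * L) (κ / n₀ * -(γ^2)⁻¹ * L) γ :=
    (h2.const_add 1).mul_const L
  have hA : HasDerivAt (fun x : ℝ => 2*ω*θ*(m₀/x - 1)) (2*ω*θ * (m₀ * -(γ^2)⁻¹)) γ := by
    simpa [mul_assoc] using (h1.sub_const 1).const_mul (2*ω*θ)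
  have hT1 := hA.mul hB
  have hT2 : HasDerivAt (fun x : ℝ => θ*(m₀ - m₀/x)*n₀*d)
      (θ * -(m₀ * -(γ^2)⁻¹) * n₀ * d) γ := by
    simpa [mul_assoc] using (((h1.const_sub m₀).const_mul θ).mul_const n₀).mul_const d
  have hsum := hT1.add hT2
  rw [hC]
  rw [HasDerivAt.deriv (f := fun x => 2*ω*θ*(m₀/x - 1)*((1 + κ/(n₀*x))*L) + θ*(m₀ - m₀/x)*n₀*d) hsum]
  have hγ2 : (0:ℝ) < γ^2 := by positivity
  have expand : 2*ω*θ * (m₀ * -(γ^2)⁻¹) * ((1 + κ/(n₀*γ))*L) +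
      2*ω*θ*(m₀/γ - 1) * (κ / n₀ * -(γ^2)⁻¹ * L) + θ * -(m₀ * -(γ^2)⁻¹) * n₀ * d
      = θ * (γ * (d*m₀*n₀^2 + 2*κ*L*ω - 2*L*m₀*n₀*ω) - 4*κ*L*m₀*ω) / (n₀ * γ^3) := by
    field_simp
    ring
  rw [expand]
  apply div_pos
  · have : 0 < γ * (d*m₀*n₀^2 + 2*κ*L*ω - 2*L*m₀*n₀*ω) - 4*κ*L*m₀*ω := by linarith
    positivity
  · positivity
end

section
/- (Theorem 1) Let all parameters be positive reals with ε ∈ (0,1), L = log₂(1/ε), and suppose D := d·m₀·n₀² + 2κLω − 2L·m₀·n₀·ω > 0. Then γ̃ = 4κL·m₀·ω/D is the unique strict global minimizer of the network-only cost C_N on (0,∞): for every γ > 0 with γ ≠ γ̃ one has C_N(γ) > C_N(γ̃). -/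
open Real Set Filter

theorem stmt4 (m₀ n₀ d κ ω θ ε L : ℝ)
    (hm : 1 < m₀) (hn : 0 < n₀) (hd : 0 < d) (hκ : 0 < κ) (hω : 0 < ω) (hθ : 0 < θ)
    (hε : 0 < ε) (hε1 : ε < 1) (hL : L = Real.logb 2 (1/ε))
    (C_N : ℝ → ℝ)
    (hC : C_N = fun γ => 2*ω*θ*(m₀/γ - 1)*((1 + κ/(n₀*γ))*L) + θ*(m₀ - m₀/γ)*n₀*d)
    (hD : 0 < d*m₀*n₀^2 + 2*κ*L*ω - 2*L*m₀*n₀*ω) :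
    ∀ γ ∈ Set.Ioi (0:ℝ), γ ≠ 4*κ*L*m₀*ω / (d*m₀*n₀^2 + 2*κ*L*ω - 2*L*m₀*n₀*ω) →
      C_N (4*κ*L*m₀*ω / (d*m₀*n₀^2 + 2*κ*L*ω - 2*L*m₀*n₀*ω)) < C_N γ := by
  have hL0 : 0 < L := by
    rw [hL]
    exact Real.logb_pos one_lt_two ((one_lt_div hε).mpr hε1)
  set D : ℝ := d*m₀*n₀^2 + 2*κ*L*ω - 2*L*m₀*n₀*ω with hDdef
  have hm0 : 0 < m₀ := lt_trans one_pos hm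
  have hnum : 0 < 4*κ*L*m₀*ω := by positivity
  intro γ hγ hne
  have hγ0 : 0 < γ := hγ
  have hγt : 0 < 4*κ*L*m₀*ω / D := div_pos hnum hD
  have key : C_N γ - C_N (4*κ*L*m₀*ω / D)
      = (2*ω*θ*L*m₀*κ/n₀) * (1/γ - D/(4*κ*L*m₀*ω))^2 := by
    rw [hC]
    field_simp
    ring
  have hx : 1/γ - D/(4*κ*L*m₀*ω) ≠ 0 := by
    intro h
    apply hne
    have h1 : 1/γ = D/(4*κ*L*m₀*ω) := by linarith
    have h2 : γ = (4*κ*L*m₀*ω)/D := by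
      rw [eq_div_iff hD.ne']
      field_simp at h1
      linarith
    exact h2
  have hsq : 0 < (1/γ - D/(4*κ*L*m₀*ω))^2 := by positivity
  have hcoef : 0 < 2*ω*θ*L*m₀*κ/n₀ := by positivity
  nlinarith [mul_pos hcoef hsq]
end

section
/- Let all parameters be positive reals with ε ∈ (0,1), L = log₂(1/ε), and suppose D := d·m₀·n₀² + 2κLω − 2L·m₀·n₀·ω ≤ 0. Then the network-only cost C_N is strictly decreasing on (0,∞); consequently its minimum over the interval [1, m₀] is attained at γ = m₀ and nowhere else. -/
/-! After substituting `t = 1/γ`, the cost becomes the quadratic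
`C_N = (θ m₀ n₀ d - 2ωθL) + (θ (-D) / n₀) t + (2ωθLm₀κ / n₀) t²`.
Its linear coefficient is nonnegative exactly when `D ≤ 0`, and its leading coefficient is
positive, so it increases strictly in `t > 0`; since `t = 1/γ` decreases, `C_N` decreases strictly
in `γ > 0`, and on `[1, m₀]` its minimum sits at the right endpoint. -/

open Real Set

lemma strictMonoOn_quadratic {a b c : ℝ} (hb : 0 ≤ b) (hc : 0 < c) :
    StrictMonoOn (fun t => a + b * t + c * t ^ 2) (Ioi 0) := by
  intro s hs t _ hst
  have hs : 0 < s := hs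
  nlinarith [mul_le_mul_of_nonneg_left hst.le hb, mul_pos hc (mul_pos (add_pos hs (hs.trans hst))
    (sub_pos.mpr hst))]

lemma strictAntiOn_quadratic_inv {a b c : ℝ} (hb : 0 ≤ b) (hc : 0 < c) :
    StrictAntiOn (fun γ => a + b * γ⁻¹ + c * γ⁻¹ ^ 2) (Ioi 0) :=
  (strictMonoOn_quadratic hb hc).comp_strictAntiOn strictAntiOn_inv_pos
    fun _ hγ => inv_pos.mpr (mem_Ioi.mp hγ)

lemma logb_two_one_div_pos {ε : ℝ} (hε : 0 < ε) (hε1 : ε < 1) : 0 < logb 2 (1 / ε) :=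
  logb_pos one_lt_two (by rw [lt_div_iff₀ hε]; linarith)

theorem stmt5_general (m₀ n₀ d κ ω θ ε L : ℝ)
    (hm : 1 < m₀) (hn : 0 < n₀) (hκ : 0 < κ) (hω : 0 < ω) (hθ : 0 < θ)
    (hε : 0 < ε) (hε1 : ε < 1) (hL : L = Real.logb 2 (1/ε))
    (C_N : ℝ → ℝ)
    (hC : C_N = fun γ => 2*ω*θ*(m₀/γ - 1)*((1 + κ/(n₀*γ))*L) + θ*(m₀ - m₀/γ)*n₀*d)
    (hD : d*m₀*n₀^2 + 2*κ*L*ω - 2*L*m₀*n₀*ω ≤ 0) :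
    StrictAntiOn C_N (Set.Ioi 0) ∧
    ∀ γ ∈ Set.Icc (1:ℝ) m₀, γ ≠ m₀ → C_N m₀ < C_N γ := by
  have hLpos : 0 < L := hL ▸ logb_two_one_div_pos hε hε1
  have hlinear : 0 ≤ θ * -(d*m₀*n₀^2 + 2*κ*L*ω - 2*L*m₀*n₀*ω) / n₀ :=
    div_nonneg (mul_nonneg hθ.le (neg_nonneg.mpr hD)) hn.le
  have hleading : 0 < 2*ω*θ*L*m₀*κ / n₀ := by
    have : 0 < m₀ := zero_lt_one.trans hm
    positivity
  have hanti : StrictAntiOn C_N (Ioi 0) := by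
    refine (strictAntiOn_quadratic_inv (a := θ*m₀*n₀*d - 2*ω*θ*L) hlinear hleading).congr ?_
    intro γ hγ
    have : γ ≠ 0 := ne_of_gt hγ
    rw [hC]
    field_simp
    ring
  refine ⟨hanti, fun γ ⟨hγ1, hγm⟩ hne => ?_⟩
  have hγ0 : 0 < γ := zero_lt_one.trans_le hγ1
  exact hanti hγ0 (hγ0.trans_le hγm) (lt_of_le_of_ne hγm hne)

theorem stmt5 (m₀ n₀ d κ ω θ ε L : ℝ)
    (hm : 1 < m₀) (hn : 0 < n₀) (hd : 0 < d) (hκ : 0 < κ) (hω : 0 < ω) (hθ : 0 < θ)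
    (hε : 0 < ε) (hε1 : ε < 1) (hL : L = Real.logb 2 (1/ε))
    (C_N : ℝ → ℝ)
    (hC : C_N = fun γ => 2*ω*θ*(m₀/γ - 1)*((1 + κ/(n₀*γ))*L) + θ*(m₀ - m₀/γ)*n₀*d)
    (hD : d*m₀*n₀^2 + 2*κ*L*ω - 2*L*m₀*n₀*ω ≤ 0) :
    StrictAntiOn C_N (Set.Ioi 0) ∧
    ∀ γ ∈ Set.Icc (1:ℝ) m₀, γ ≠ m₀ → C_N m₀ < C_N γ :=
  stmt5_general m₀ n₀ d κ ω θ ε L hm hn hκ hω hθ hε hε1 hL C_N hC hD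
end

section
/- Let all parameters be positive reals with ε ∈ (0,1), L = log₂(1/ε), and suppose D := d·m₀·n₀² + 2κLω − 2L·m₀·n₀·ω > 0 and γ̃ = 4κL·m₀·ω/D < 1. Then the network-only cost C_N is strictly increasing on [1, m₀], and hence C_N(1) < C_N(γ) for every γ ∈ (1, m₀]. -/
open Real Set Filter

theorem stmt6 (m₀ n₀ d κ ω θ ε L : ℝ)
    (hm : 1 < m₀) (hn : 0 < n₀) (hd : 0 < d) (hκ : 0 < κ) (hω : 0 < ω) (hθ : 0 < θ)
    (hε : 0 < ε) (hε1 : ε < 1) (hL : L = Real.logb 2 (1/ε))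
    (C_N : ℝ → ℝ)
    (hC : C_N = fun γ => 2*ω*θ*(m₀/γ - 1)*((1 + κ/(n₀*γ))*L) + θ*(m₀ - m₀/γ)*n₀*d)
    (hD : 0 < d*m₀*n₀^2 + 2*κ*L*ω - 2*L*m₀*n₀*ω) (hγ : 4*κ*L*m₀*ω / (d*m₀*n₀^2 + 2*κ*L*ω - 2*L*m₀*n₀*ω) < 1) :
    StrictMonoOn C_N (Set.Icc 1 m₀) ∧
    ∀ γ ∈ Set.Ioc (1:ℝ) m₀, C_N 1 < C_N γ := by
  have hL0 : 0 < L := by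
    rw [hL]
    apply Real.logb_pos (by norm_num)
    rw [one_div]
    exact (one_lt_inv₀ hε).mpr hε1
  have hkey : 4*κ*L*m₀*ω < d*m₀*n₀^2 + 2*κ*L*ω - 2*L*m₀*n₀*ω := (div_lt_one hD).mp hγ
  have mono : StrictMonoOn C_N (Set.Icc 1 m₀) := by
    intro a ha b hb hab
    have ha1 : 1 ≤ a := ha.1
    have hbm : b ≤ m₀ := hb.2
    have ha0 : 0 < a := lt_of_lt_of_le one_pos ha1
    have hb0 : 0 < b := ha0.trans hab
    rw [hC]
    simp only
    have hua : 1/a ≤ 1 := by rw [div_le_one ha0]; exact ha1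
    have hub : 1/b < 1 := by rw [div_lt_one hb0]; exact lt_of_le_of_lt ha1 hab
    have h1 : 0 < 1/a - 1/b := by
      have := one_div_lt_one_div_of_lt ha0 hab
      linarith
    have expand : (2*ω*θ*(m₀/b - 1)*((1 + κ/(n₀*b))*L) + θ*(m₀ - m₀/b)*n₀*d)
        - (2*ω*θ*(m₀/a - 1)*((1 + κ/(n₀*a))*L) + θ*(m₀ - m₀/a)*n₀*d)
        = (1/a - 1/b) * (θ*n₀*d*m₀ - 2*ω*θ*L*m₀ + 2*ω*θ*L*(κ/n₀)
            - 2*ω*θ*L*(κ/n₀)*m₀*(1/a + 1/b)) := by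
      field_simp
      ring
    have hfac : 0 < θ*n₀*d*m₀ - 2*ω*θ*L*m₀ + 2*ω*θ*L*(κ/n₀)
        - 2*ω*θ*L*(κ/n₀)*m₀*(1/a + 1/b) := by
      have hsum : 1/a + 1/b ≤ 2 := by linarith
      have hc : 0 < κ/n₀ := div_pos hκ hn
      have hmul : 2*ω*θ*L*(κ/n₀)*m₀*(1/a + 1/b) ≤ 2*ω*θ*L*(κ/n₀)*m₀*2 := by
        apply mul_le_mul_of_nonneg_left hsum
        positivity
      have hscaled : θ/n₀ * (4*κ*L*m₀*ω) < θ/n₀ * (d*m₀*n₀^2 + 2*κ*L*ω - 2*L*m₀*n₀*ω) := by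
        apply mul_lt_mul_of_pos_left hkey (div_pos hθ hn)
      have hn' : n₀ ≠ 0 := ne_of_gt hn
      have e1 : θ/n₀ * (4*κ*L*m₀*ω) = 2*ω*θ*L*(κ/n₀)*m₀*2 := by field_simp; ring
      have e2 : θ/n₀ * (d*m₀*n₀^2 + 2*κ*L*ω - 2*L*m₀*n₀*ω)
          = θ*n₀*d*m₀ - 2*ω*θ*L*m₀ + 2*ω*θ*L*(κ/n₀) := by field_simp; ring
      linarith [e1 ▸ e2 ▸ hscaled]
    nlinarith [mul_pos h1 hfac]
  refine ⟨mono, fun γ hγ' => ?_⟩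
  exact mono ⟨le_refl 1, le_of_lt hm⟩ ⟨le_of_lt hγ'.1, hγ'.2⟩ hγ'.1
end

section
/- Let all parameters be positive reals with ε ∈ (0,1), L = log₂(1/ε), and suppose D := d·m₀·n₀² + 2κLω − 2L·m₀·n₀·ω > 0 and 1 ≤ γ̃ ≤ m₀ where γ̃ = 4κL·m₀·ω/D. Then C_N(γ̃) ≤ C_N(γ) for every γ ∈ [1, m₀], i.e. the minimum of the network-only cost over [1, m₀] is attained at the interior critical point γ̃. -/
/-!
In the variable `x = 1/γ` the network cost is a quadratic polynomial with leading coefficient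
`2ωθLm₀κ/n₀ > 0` whose vertex is `x = D/(4κLm₀ω) = 1/γ̃`. Completing the square gives
`C_N(γ) - C_N(γ̃) = (2ωθLm₀κ/n₀)(1/γ - 1/γ̃)² ≥ 0`.
-/

section NetworkCost

variable (m₀ n₀ d κ ω θ L : ℝ)

noncomputable def networkCost (γ : ℝ) : ℝ :=
  2*ω*θ*(m₀/γ - 1)*((1 + κ/(n₀*γ))*L) + θ*(m₀ - m₀/γ)*n₀*d

noncomputable def networkCostCritical : ℝ :=
  4*κ*L*m₀*ω / (d*m₀*n₀^2 + 2*κ*L*ω - 2*L*m₀*n₀*ω)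

/-- Both sides are polynomials in `γ⁻¹`, and `γ̃⁻¹ = D/(4κLm₀ω)` holds even under `0⁻¹ = 0`. -/
theorem networkCost_sub_networkCost_critical (hn : n₀ ≠ 0) (hκ : κ ≠ 0) (hL : L ≠ 0)
    (hm : m₀ ≠ 0) (hω : ω ≠ 0) (γ : ℝ) :
    networkCost m₀ n₀ d κ ω θ L γ - networkCost m₀ n₀ d κ ω θ L (networkCostCritical m₀ n₀ d κ ω L)
      = 2*ω*θ*L*m₀*κ/n₀ * (γ⁻¹ - (networkCostCritical m₀ n₀ d κ ω L)⁻¹)^2 := by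
  simp only [networkCost, div_eq_mul_inv, mul_inv, networkCostCritical, inv_inv]
  field_simp
  ring

end NetworkCost

theorem stmt7_general (m₀ n₀ d κ ω θ ε L : ℝ)
    (hm : 1 < m₀) (hn : 0 < n₀) (hκ : 0 < κ) (hω : 0 < ω) (hθ : 0 < θ)
    (hε : 0 < ε) (hε1 : ε < 1) (hL : L = Real.logb 2 (1/ε))
    (C_N : ℝ → ℝ)
    (hC : C_N = fun γ => 2*ω*θ*(m₀/γ - 1)*((1 + κ/(n₀*γ))*L) + θ*(m₀ - m₀/γ)*n₀*d) :
    ∀ γ ∈ Set.Icc (1:ℝ) m₀, C_N (4*κ*L*m₀*ω / (d*m₀*n₀^2 + 2*κ*L*ω - 2*L*m₀*n₀*ω)) ≤ C_N γ := by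
  intro γ _
  have hL0 : 0 < L := hL ▸ Real.logb_pos one_lt_two (one_lt_one_div hε hε1)
  have hm0 : 0 < m₀ := zero_lt_one.trans hm
  have hdiff := networkCost_sub_networkCost_critical m₀ n₀ d κ ω θ L hn.ne' hκ.ne' hL0.ne'
    hm0.ne' hω.ne' γ
  have hC' : C_N = networkCost m₀ n₀ d κ ω θ L := hC
  subst hC'
  rw [← sub_nonneg, ← networkCostCritical, hdiff]
  positivity

theorem stmt7 (m₀ n₀ d κ ω θ ε L : ℝ)
    (hm : 1 < m₀) (hn : 0 < n₀) (hd : 0 < d) (hκ : 0 < κ) (hω : 0 < ω) (hθ : 0 < θ)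
    (hε : 0 < ε) (hε1 : ε < 1) (hL : L = Real.logb 2 (1/ε))
    (C_N : ℝ → ℝ)
    (hC : C_N = fun γ => 2*ω*θ*(m₀/γ - 1)*((1 + κ/(n₀*γ))*L) + θ*(m₀ - m₀/γ)*n₀*d)
    (hD : 0 < d*m₀*n₀^2 + 2*κ*L*ω - 2*L*m₀*n₀*ω) (hγ1 : 1 ≤ 4*κ*L*m₀*ω / (d*m₀*n₀^2 + 2*κ*L*ω - 2*L*m₀*n₀*ω)) (hγ2 : 4*κ*L*m₀*ω / (d*m₀*n₀^2 + 2*κ*L*ω - 2*L*m₀*n₀*ω) ≤ m₀) :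
    ∀ γ ∈ Set.Icc (1:ℝ) m₀, C_N (4*κ*L*m₀*ω / (d*m₀*n₀^2 + 2*κ*L*ω - 2*L*m₀*n₀*ω)) ≤ C_N γ :=
  stmt7_general m₀ n₀ d κ ω θ ε L hm hn hκ hω hθ hε hε1 hL C_N hC
end

section
/- Let all parameters be positive reals with ε ∈ (0,1), L = log₂(1/ε), and suppose D := d·m₀·n₀² + 2κLω − 2L·m₀·n₀·ω > 0 and γ̃ = 4κL·m₀·ω/D > m₀. Then the network-only cost C_N is strictly decreasing on [1, m₀], and hence C_N(m₀) < C_N(γ) for every γ ∈ [1, m₀). -/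
open Real Set Filter

theorem stmt8 (m₀ n₀ d κ ω θ ε L : ℝ)
    (hm : 1 < m₀) (hn : 0 < n₀) (hd : 0 < d) (hκ : 0 < κ) (hω : 0 < ω) (hθ : 0 < θ)
    (hε : 0 < ε) (hε1 : ε < 1) (hL : L = Real.logb 2 (1/ε))
    (C_N : ℝ → ℝ)
    (hC : C_N = fun γ => 2*ω*θ*(m₀/γ - 1)*((1 + κ/(n₀*γ))*L) + θ*(m₀ - m₀/γ)*n₀*d)
    (hD : 0 < d*m₀*n₀^2 + 2*κ*L*ω - 2*L*m₀*n₀*ω) (hγ : m₀ < 4*κ*L*m₀*ω / (d*m₀*n₀^2 + 2*κ*L*ω - 2*L*m₀*n₀*ω)) :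
    StrictAntiOn C_N (Set.Icc 1 m₀) ∧
    ∀ γ ∈ Set.Ico (1:ℝ) m₀, C_N m₀ < C_N γ := by
  have hL0 : 0 < L := by
    rw [hL]
    exact Real.logb_pos one_lt_two ((one_lt_div hε).mpr hε1)
  have hm0 : 0 < m₀ := lt_trans one_pos hm
  have hγ' : m₀ * (d*m₀*n₀^2 + 2*κ*L*ω - 2*L*m₀*n₀*ω) < 4*κ*L*m₀*ω :=
    (lt_div_iff₀ hD).mp hγ
  have hE : 0 < 2*κ*L*ω + 2*L*m₀*n₀*ω - d*m₀*n₀^2 := by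
    have hmE : 0 < m₀ * (2*κ*L*ω + 2*L*m₀*n₀*ω - d*m₀*n₀^2) := by nlinarith
    nlinarith
  have key : ∀ a b : ℝ, 1 ≤ a → a < b → b ≤ m₀ → C_N b < C_N a := by
    intro a b ha hab hbm
    have ha0 : 0 < a := lt_of_lt_of_le one_pos ha
    have hb0 : 0 < b := ha0.trans hab
    rw [hC]
    simp only
    rw [← sub_pos]
    have heq : (2*ω*θ*(m₀/a - 1)*((1 + κ/(n₀*a))*L) + θ*(m₀ - m₀/a)*n₀*d)
        - (2*ω*θ*(m₀/b - 1)*((1 + κ/(n₀*b))*L) + θ*(m₀ - m₀/b)*n₀*d)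
        = (b - a) * θ / (n₀ * a^2 * b^2) *
          (2*ω*L*κ*m₀*(a+b) + (2*ω*L*m₀*n₀ - 2*ω*L*κ - d*n₀^2*m₀)*(a*b)) := by
      field_simp
      ring
    rw [heq]
    apply mul_pos
    · apply div_pos (mul_pos (sub_pos.mpr hab) hθ)
      positivity
    · have h1 : a*b ≤ m₀*a := by nlinarith
      have h2 : a*b ≤ m₀*b := by nlinarith
      have hc : (0:ℝ) ≤ 2*ω*L*κ := by positivity
      linarith [mul_nonneg hc (sub_nonneg.mpr h1), mul_nonneg hc (sub_nonneg.mpr h2),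
        mul_pos (mul_pos ha0 hb0) hE]
  constructor
  · intro x hx y hy hxy
    exact key x y hx.1 hxy hy.2
  · intro γ hγ'
    exact key γ m₀ hγ'.1 hγ'.2 le_rfl
end

section
/- Let all parameters be positive reals with ε ∈ (0,1) and L = log₂(1/ε), and let C be the total cost with linear computational cost. Then the derivative C′(γ) tends to −∞ as γ → 0⁺. -/
open Real Set Filter

theorem stmt10 (m₀ n₀ d κ ω θ τ β ε L : ℝ)
    (hm : 1 < m₀) (hn : 0 < n₀) (hd : 0 < d) (hκ : 0 < κ) (hω : 0 < ω) (hθ : 0 < θ)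
    (hτ : 0 < τ) (hβ : 0 < β)
    (hε : 0 < ε) (hε1 : ε < 1) (hL : L = Real.logb 2 (1/ε))
    (C : ℝ → ℝ)
    (hC : C = fun γ => 2*ω*θ*(m₀/γ - 1)*((1 + κ/(n₀*γ))*L) + θ*(m₀ - m₀/γ)*n₀*d
      + β*γ*τ*n₀*(m₀ + γ)*((1 + κ/(n₀*γ))*L)) :
    Filter.Tendsto (deriv C) (nhdsWithin 0 (Set.Ioi 0)) Filter.atBot := by
  have hL0 : 0 < L := by
    rw [hL]
    exact Real.logb_pos (by norm_num) (one_lt_one_div hε hε1)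
  set a : ℝ := 2*ω*θ*L*m₀*κ/n₀ with ha_def
  set b : ℝ := 2*ω*θ*L*m₀ - 2*ω*θ*L*κ/n₀ - θ*n₀*d*m₀ with hb_def
  set c : ℝ := -(2*ω*θ*L) + θ*n₀*d*m₀ + β*τ*L*κ*m₀ with hc_def
  set dd : ℝ := β*τ*n₀*L*m₀ + β*τ*L*κ with hdd_def
  set e : ℝ := β*τ*n₀*L with he_def
  have hn' : n₀ ≠ 0 := ne_of_gt hn
  have ha : 0 < a := by
    apply div_pos _ hn
    positivity
  set g : ℝ → ℝ := fun x => a * (x⁻¹)^2 + b * x⁻¹ + c + dd * x + e * x^2 with hg_def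
  have hgC : ∀ x : ℝ, x ≠ 0 → C x = g x := by
    intro x hx
    rw [hC, hg_def]
    simp only
    rw [ha_def, hb_def, hc_def, hdd_def, he_def]
    field_simp
    ring
  set ψ : ℝ → ℝ := fun x => (-(2*a) - b*x) * (x^3)⁻¹ + (dd + 2*e*x) with hψ_def
  have hderiv : ∀ x : ℝ, 0 < x → deriv C x = ψ x := by
    intro x hx
    have hx0 : x ≠ 0 := ne_of_gt hx
    have hCg : C =ᶠ[nhds x] g :=
      Filter.eventuallyEq_of_mem (isOpen_Ioi.mem_nhds hx)
        (fun y hy => hgC y (ne_of_gt hy))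
    rw [hCg.deriv_eq]
    have h1 : HasDerivAt (fun y : ℝ => y⁻¹) (-(x^2)⁻¹) x := hasDerivAt_inv hx0
    have h2 : HasDerivAt (fun y : ℝ => (y⁻¹)^2) ((2:ℕ) * (x⁻¹)^(2-1) * (-(x^2)⁻¹)) x :=
      h1.pow 2
    have h3' := ((((h2.const_mul a).add (h1.const_mul b)).add_const c).add
        ((hasDerivAt_id x).const_mul dd)).add (((hasDerivAt_id x).pow 2).const_mul e)
    have h3 : HasDerivAt g
        (a * ((2:ℕ) * (x⁻¹)^(2-1) * (-(x^2)⁻¹)) + b * (-(x^2)⁻¹) + dd * 1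
          + e * ((2:ℕ) * x^(2-1) * 1)) x := by
      simpa [hg_def, Pi.add_def] using h3'
    rw [h3.deriv, hψ_def]
    simp only
    field_simp
    norm_num
    field_simp
    ring
  have hEq : deriv C =ᶠ[nhdsWithin 0 (Set.Ioi 0)] ψ := by
    filter_upwards [self_mem_nhdsWithin] with x hx
    exact hderiv x hx
  apply Filter.Tendsto.congr' hEq.symm
  have h1 : Tendsto (fun x : ℝ => -(2*a) - b*x) (nhdsWithin 0 (Set.Ioi 0)) (nhds (-(2*a))) := by
    have : Tendsto (fun x : ℝ => -(2*a) - b*x) (nhds 0) (nhds (-(2*a) - b*0)) := by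
      exact (tendsto_const_nhds.sub ((continuous_const.mul continuous_id).tendsto 0))
    simpa using this.mono_left nhdsWithin_le_nhds
  have h2 : Tendsto (fun x : ℝ => (x^3)⁻¹) (nhdsWithin 0 (Set.Ioi 0)) atTop := by
    apply tendsto_inv_nhdsGT_zero.comp
    rw [tendsto_nhdsWithin_iff]
    constructor
    · have : Tendsto (fun x : ℝ => x^3) (nhds 0) (nhds (0^3)) := (continuous_pow 3).tendsto 0
      simpa using this.mono_left nhdsWithin_le_nhds
    · filter_upwards [self_mem_nhdsWithin] with x hx
      exact pow_pos (Set.mem_Ioi.mp hx) 3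
  have hmain : Tendsto (fun x : ℝ => (-(2*a) - b*x) * (x^3)⁻¹)
      (nhdsWithin 0 (Set.Ioi 0)) atBot :=
    h1.neg_mul_atTop (by linarith) h2
  have h3 : Tendsto (fun x : ℝ => dd + 2*e*x) (nhdsWithin 0 (Set.Ioi 0)) (nhds dd) := by
    have : Tendsto (fun x : ℝ => dd + 2*e*x) (nhds 0) (nhds (dd + 2*e*0)) :=
      tendsto_const_nhds.add ((continuous_const.mul continuous_id).tendsto 0)
    simpa using this.mono_left nhdsWithin_le_nhds
  exact hmain.atBot_add h3
end

section
/- Let all parameters be positive reals with ε ∈ (0,1) and L = log₂(1/ε). The quartic polynomial N(X) = 2βL·n₀²·τ·X⁴ + βL·n₀·τ·(m₀·n₀ + κ)·X³ + θ·(d·m₀·n₀² + 2Lω·(κ − m₀·n₀))·X − 4Lω·θ·κ·m₀ (with positive leading coefficient and strictly negative constant term) has exactly one root in (0,∞): there exists a unique γ₁ > 0 with N(γ₁) = 0; moreover N(γ) < 0 for 0 < γ < γ₁ and N(γ) > 0 for γ > γ₁. -/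
/-!
Dividing by `X`, the quartic becomes `a₄X³ + a₃X² + a₁ - c/X`, which is strictly increasing on
`(0, ∞)` as soon as `a₄, a₃ ≥ 0` and `c > 0`. Hence `N` changes sign at most once on `(0, ∞)`, and it does change
sign there since `N 0 < 0` and `N → ∞`.
-/

open Real Set Filter

theorem exists_pos_root_of_strictMonoOn_div {f : ℝ → ℝ} (hf : Continuous f) (h0 : f 0 < 0)
    (htop : Tendsto f atTop atTop) (hmono : StrictMonoOn (fun x => f x / x) (Ioi 0)) :
    ∃ γ₁ : ℝ, 0 < γ₁ ∧ f γ₁ = 0 ∧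
      (∀ γ : ℝ, 0 < γ → f γ = 0 → γ = γ₁) ∧
      (∀ γ : ℝ, 0 < γ → γ < γ₁ → f γ < 0) ∧
      (∀ γ : ℝ, γ₁ < γ → 0 < f γ) := by
  obtain ⟨y, hy, hy0⟩ := ((htop.eventually_gt_atTop 0).and (eventually_gt_atTop 0)).exists
  obtain ⟨γ₁, ⟨hγ₁, -⟩, hroot⟩ :=
    intermediate_value_Ioo hy0.le hf.continuousOn (show (0 : ℝ) ∈ Ioo (f 0) (f y) from ⟨h0, hy⟩)
  have hdiv : f γ₁ / γ₁ = 0 := by rw [hroot, zero_div]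
  have hneg : ∀ γ : ℝ, 0 < γ → γ < γ₁ → f γ < 0 := by
    intro γ hγ hlt
    have h : f γ / γ < 0 := hdiv ▸ hmono hγ hγ₁ hlt
    simpa using (div_lt_iff₀ hγ).mp h
  have hpos : ∀ γ : ℝ, γ₁ < γ → 0 < f γ := by
    intro γ hlt
    have hγ : 0 < γ := hγ₁.trans hlt
    exact (div_pos_iff_of_pos_right hγ).mp (hdiv ▸ hmono hγ₁ hγ hlt)
  refine ⟨γ₁, hγ₁, hroot, fun γ hγ hγroot => ?_, hneg, hpos⟩
  rcases lt_trichotomy γ γ₁ with hlt | heq | hgt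
  · exact absurd hγroot (hneg γ hγ hlt).ne
  · exact heq
  · exact absurd hγroot (hpos γ hgt).ne'

section Quartic

variable (a₄ a₃ a₁ c : ℝ)

theorem strictMonoOn_quartic_div (h₄ : 0 ≤ a₄) (h₃ : 0 ≤ a₃) (hc : 0 < c) :
    StrictMonoOn (fun x => (a₄ * x ^ 4 + a₃ * x ^ 3 + a₁ * x - c) / x) (Ioi 0) := by
  intro x (hx : 0 < x) y (hy : 0 < y) hxy
  have expand : ∀ z : ℝ, 0 < z →
      (a₄ * z ^ 4 + a₃ * z ^ 3 + a₁ * z - c) / z = a₄ * z ^ 3 + a₃ * z ^ 2 + a₁ - c / z := by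
    intro z hz
    field_simp
  simp only [expand x hx, expand y hy]
  have h₄' : a₄ * x ^ 3 ≤ a₄ * y ^ 3 := by gcongr
  have h₃' : a₃ * x ^ 2 ≤ a₃ * y ^ 2 := by gcongr
  have hc' : c / y < c / x := div_lt_div_of_pos_left hc hx hxy
  linarith

theorem tendsto_quartic_atTop (h₄ : 0 < a₄) (h₃ : 0 ≤ a₃) :
    Tendsto (fun x => a₄ * x ^ 4 + a₃ * x ^ 3 + a₁ * x - c) atTop atTop := by
  have hcubic : Tendsto (fun x => (a₃ * x ^ 2 + a₁) + a₄ * x ^ 3) atTop atTop :=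
    tendsto_atTop_add_left_of_le _ a₁ (fun x => by nlinarith [sq_nonneg x])
      ((tendsto_pow_atTop (by norm_num)).const_mul_atTop h₄)
  have hprod := tendsto_id.atTop_mul_atTop₀ hcubic
  refine (tendsto_atTop_add_const_right _ (-c) hprod).congr fun x => ?_
  simp only [id]
  ring

theorem exists_pos_root_quartic (h₄ : 0 < a₄) (h₃ : 0 ≤ a₃) (hc : 0 < c) :
    ∃ γ₁ : ℝ, 0 < γ₁ ∧ a₄ * γ₁ ^ 4 + a₃ * γ₁ ^ 3 + a₁ * γ₁ - c = 0 ∧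
      (∀ γ : ℝ, 0 < γ → a₄ * γ ^ 4 + a₃ * γ ^ 3 + a₁ * γ - c = 0 → γ = γ₁) ∧
      (∀ γ : ℝ, 0 < γ → γ < γ₁ → a₄ * γ ^ 4 + a₃ * γ ^ 3 + a₁ * γ - c < 0) ∧
      (∀ γ : ℝ, γ₁ < γ → 0 < a₄ * γ ^ 4 + a₃ * γ ^ 3 + a₁ * γ - c) :=
  exists_pos_root_of_strictMonoOn_div (by fun_prop) (by simpa using hc)
    (tendsto_quartic_atTop a₄ a₃ a₁ c h₄ h₃) (strictMonoOn_quartic_div a₄ a₃ a₁ c h₄.le h₃ hc)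

end Quartic

theorem stmt14_general (m₀ n₀ d κ ω θ τ β ε L : ℝ)
    (hm : 1 < m₀) (hn : 0 < n₀) (hκ : 0 < κ) (hω : 0 < ω) (hθ : 0 < θ)
    (hτ : 0 < τ) (hβ : 0 < β)
    (hε : 0 < ε) (hε1 : ε < 1) (hL : L = Real.logb 2 (1/ε))
    (N : ℝ → ℝ)
    (hN : N = fun X => 2*β*L*n₀^2*τ*X^4 + β*L*n₀*τ*(m₀*n₀ + κ)*X^3
      + θ*(d*m₀*n₀^2 + 2*L*ω*(κ - m₀*n₀))*X - 4*L*ω*θ*κ*m₀) :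
    ∃ γ₁ : ℝ, 0 < γ₁ ∧ N γ₁ = 0 ∧
      (∀ γ : ℝ, 0 < γ → N γ = 0 → γ = γ₁) ∧
      (∀ γ : ℝ, 0 < γ → γ < γ₁ → N γ < 0) ∧
      (∀ γ : ℝ, γ₁ < γ → 0 < N γ) := by
  subst hN
  have hm₀ : 0 < m₀ := zero_lt_one.trans hm
  have hL₀ : 0 < L := hL ▸ Real.logb_pos one_lt_two (one_lt_one_div hε hε1)
  exact exists_pos_root_quartic _ _ _ _ (by positivity) (by positivity) (by positivity)

theorem stmt14 (m₀ n₀ d κ ω θ τ β ε L : ℝ)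
    (hm : 1 < m₀) (hn : 0 < n₀) (hd : 0 < d) (hκ : 0 < κ) (hω : 0 < ω) (hθ : 0 < θ)
    (hτ : 0 < τ) (hβ : 0 < β)
    (hε : 0 < ε) (hε1 : ε < 1) (hL : L = Real.logb 2 (1/ε))
    (N : ℝ → ℝ)
    (hN : N = fun X => 2*β*L*n₀^2*τ*X^4 + β*L*n₀*τ*(m₀*n₀ + κ)*X^3
      + θ*(d*m₀*n₀^2 + 2*L*ω*(κ - m₀*n₀))*X - 4*L*ω*θ*κ*m₀) :
    ∃ γ₁ : ℝ, 0 < γ₁ ∧ N γ₁ = 0 ∧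
      (∀ γ : ℝ, 0 < γ → N γ = 0 → γ = γ₁) ∧
      (∀ γ : ℝ, 0 < γ → γ < γ₁ → N γ < 0) ∧
      (∀ γ : ℝ, γ₁ < γ → 0 < N γ) :=
  stmt14_general m₀ n₀ d κ ω θ τ β ε L hm hn hκ hω hθ hτ hβ hε hε1 hL N hN
end

section
/- (Theorem 2, critical point) Let all parameters be positive reals with ε ∈ (0,1) and L = log₂(1/ε), and let C be the total cost with linear computational cost. Then there exists a unique γ₁ > 0 such that C′(γ₁) = 0; moreover C′(γ) < 0 for all 0 < γ < γ₁ and C′(γ) > 0 for all γ > γ₁. -/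
open Real Set Filter

set_option maxHeartbeats 1600000 in
theorem stmt15 (m₀ n₀ d κ ω θ τ β ε L : ℝ)
    (hm : 1 < m₀) (hn : 0 < n₀) (hd : 0 < d) (hκ : 0 < κ) (hω : 0 < ω) (hθ : 0 < θ)
    (hτ : 0 < τ) (hβ : 0 < β)
    (hε : 0 < ε) (hε1 : ε < 1) (hL : L = Real.logb 2 (1/ε))
    (C : ℝ → ℝ)
    (hC : C = fun γ => 2*ω*θ*(m₀/γ - 1)*((1 + κ/(n₀*γ))*L) + θ*(m₀ - m₀/γ)*n₀*d
      + β*γ*τ*n₀*(m₀ + γ)*((1 + κ/(n₀*γ))*L)) :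
    ∃ γ₁ : ℝ, 0 < γ₁ ∧ deriv C γ₁ = 0 ∧
      (∀ γ : ℝ, 0 < γ → deriv C γ = 0 → γ = γ₁) ∧
      (∀ γ : ℝ, 0 < γ → γ < γ₁ → deriv C γ < 0) ∧
      (∀ γ : ℝ, γ₁ < γ → 0 < deriv C γ) := by
  have hm0 : 0 < m₀ := lt_trans one_pos hm
  have hn0 : n₀ ≠ 0 := ne_of_gt hn
  have hL0 : 0 < L := by
    have h1ε : 1 < 1/ε := by rw [lt_div_iff₀ hε]; linarith
    rw [hL]; exact Real.logb_pos one_lt_two h1ε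
  obtain ⟨p, hp⟩ : ∃ p : ℝ, p = 2*ω*θ*L*m₀ - 2*ω*θ*L*κ/n₀ - θ*n₀*d*m₀ := ⟨_, rfl⟩
  obtain ⟨q, hq⟩ : ∃ q : ℝ, q = 2*ω*θ*L*m₀*κ/n₀ := ⟨_, rfl⟩
  obtain ⟨r, hr⟩ : ∃ r : ℝ, r = -(2*ω*θ*L) + θ*n₀*d*m₀ + β*τ*L*κ*m₀ := ⟨_, rfl⟩
  obtain ⟨s, hs⟩ : ∃ s : ℝ, s = β*τ*L*(n₀*m₀+κ) := ⟨_, rfl⟩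
  obtain ⟨t, ht⟩ : ∃ t : ℝ, t = β*τ*L*n₀ := ⟨_, rfl⟩
  have hq0 : 0 < q := by rw [hq]; positivity
  have hs0 : 0 < s := by rw [hs]; positivity
  have ht0 : 0 < t := by rw [ht]; positivity
  obtain ⟨F, hF⟩ : ∃ F : ℝ → ℝ, F = fun x => -p - 2*q/x + s*x^2 + 2*t*x^3 := ⟨_, rfl⟩
  -- derivative formula
  have hderiv : ∀ γ : ℝ, 0 < γ → deriv C γ = F γ / γ^2 := by
    intro γ hγ
    have hγ0 : γ ≠ 0 := ne_of_gt hγ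
    have hEq : C =ᶠ[nhds γ] (fun x => p*x⁻¹ + q*(x⁻¹)^2 + r + s*x + t*x^2) := by
      filter_upwards [Ioi_mem_nhds hγ] with x hx
      have hx0 : (x:ℝ) ≠ 0 := ne_of_gt hx
      rw [hC]
      simp only [hp, hq, hr, hs, ht]
      field_simp
      ring
    rw [hEq.deriv_eq]
    have H1 := (hasDerivAt_inv hγ0).const_mul p
    have H2 := ((hasDerivAt_inv hγ0).pow 2).const_mul q
    have H3 := hasDerivAt_const γ r
    have H4 := (hasDerivAt_id γ).const_mul s
    have H5 := (hasDerivAt_pow 2 γ).const_mul t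
    have H := (((H1.add H2).add H3).add H4).add H5
    refine H.deriv.trans ?_
    rw [hF]
    field_simp
    linear_combination (-2*q) * (mul_inv_cancel₀ hγ0)
  -- strict monotonicity of F on positives
  have hmono : ∀ x y : ℝ, 0 < x → x < y → F x < F y := by
    intro x y hx hxy
    have hy : 0 < y := hx.trans hxy
    have h1 : 2*q/y < 2*q/x := div_lt_div_of_pos_left (by positivity) hx hxy
    have h2 : x^2 < y^2 := by nlinarith [sq_nonneg (x+y), mul_pos hx hy]
    have h3 : x^3 < y^3 := by nlinarith [sq_nonneg (x+y), sq_nonneg (x-y)]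
    have h4 : s*x^2 < s*y^2 := mul_lt_mul_of_pos_left h2 hs0
    have h5 : 2*t*x^3 < 2*t*y^3 := mul_lt_mul_of_pos_left h3 (by positivity)
    simp only [hF]
    linarith
  -- point a with F a < 0
  obtain ⟨M, hM⟩ : ∃ M : ℝ, M = |p| + s + 2*t + 1 := ⟨_, rfl⟩
  have hM0 : 0 < M := by rw [hM]; positivity
  obtain ⟨a, haDef⟩ : ∃ a : ℝ, a = min 1 (q / M) := ⟨_, rfl⟩
  have ha : 0 < a := by rw [haDef]; exact lt_min one_pos (by positivity)
  have ha1 : a ≤ 1 := by rw [haDef]; exact min_le_left _ _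
  have haq : a ≤ q / M := by rw [haDef]; exact min_le_right _ _
  have hqa : M ≤ q / a := by
    rw [le_div_iff₀ ha]
    calc M * a ≤ M * (q / M) := mul_le_mul_of_nonneg_left haq hM0.le
      _ = q := by field_simp
  have hFa : F a < 0 := by
    have ha2 : a^2 ≤ 1 := pow_le_one₀ ha.le ha1
    have ha3 : a^3 ≤ 1 := pow_le_one₀ ha.le ha1
    have h2 : s*a^2 ≤ s*1 := mul_le_mul_of_nonneg_left ha2 hs0.le
    have h3 : 2*t*a^3 ≤ 2*t*1 := mul_le_mul_of_nonneg_left ha3 (by positivity)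
    have h4 : -p ≤ |p| := neg_le_abs p
    have h5 : 2*M ≤ 2*q/a := by
      have : 2*q/a = 2*(q/a) := by ring
      rw [this]; linarith
    simp only [hF]
    have hMdef : M = |p| + s + 2*t + 1 := hM
    linarith
  -- point b with F b > 0
  obtain ⟨b, hbDef⟩ : ∃ b : ℝ, b = max (a+1) (max 1 ((|p|+2*q+1)/(2*t))) := ⟨_, rfl⟩
  have hab : a < b := by rw [hbDef]; exact lt_of_lt_of_le (lt_add_one a) (le_max_left _ _)
  have hb1 : 1 ≤ b := by rw [hbDef]; exact le_trans (le_max_left _ _) (le_max_right _ _)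
  have hbt : (|p|+2*q+1)/(2*t) ≤ b := by rw [hbDef]; exact le_trans (le_max_right _ _) (le_max_right _ _)
  have hb0 : 0 < b := lt_of_lt_of_le one_pos hb1
  have hFb : 0 < F b := by
    have h1 : 2*q/b ≤ 2*q := div_le_self (by positivity) hb1
    have h2 : |p|+2*q+1 ≤ b*(2*t) := (div_le_iff₀ (by positivity)).mp hbt
    have h3 : b ≤ b^3 := le_self_pow₀ hb1 (by norm_num)
    have h4 : p ≤ |p| := le_abs_self p
    have h5 : 2*t*b ≤ 2*t*b^3 := mul_le_mul_of_nonneg_left h3 (by positivity)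
    have h6 : 0 ≤ s*b^2 := by positivity
    have h2' : |p|+2*q+1 ≤ 2*t*b := by linarith [mul_comm b (2*t)]
    simp only [hF]
    linarith
  -- IVT
  have hFc : ContinuousOn F (Icc a b) := by
    intro x hx
    have hx0 : x ≠ 0 := ne_of_gt (lt_of_lt_of_le ha hx.1)
    apply ContinuousAt.continuousWithinAt
    rw [hF]
    exact (((continuousAt_const.sub (continuousAt_const.div continuousAt_id hx0)).add
      (continuousAt_const.mul (continuousAt_id.pow 2))).add
      (continuousAt_const.mul (continuousAt_id.pow 3)))
  have key := intermediate_value_Icc hab.le hFc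
  have h0mem : (0:ℝ) ∈ Icc (F a) (F b) := ⟨hFa.le, hFb.le⟩
  obtain ⟨γ₁, hγ₁mem, hFγ₁⟩ := key h0mem
  have hγ₁0 : 0 < γ₁ := lt_of_lt_of_le ha hγ₁mem.1
  have hFzero : ∀ γ : ℝ, 0 < γ → deriv C γ = 0 → F γ = 0 := by
    intro γ hγ h0
    rw [hderiv γ hγ] at h0
    rcases div_eq_zero_iff.mp h0 with h | h
    · exact h
    · exact absurd h (pow_ne_zero 2 (ne_of_gt hγ))
  refine ⟨γ₁, hγ₁0, ?_, ?_, ?_, ?_⟩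
  · rw [hderiv γ₁ hγ₁0, hFγ₁, zero_div]
  · intro γ hγ h0
    have hFγ : F γ = 0 := hFzero γ hγ h0
    rcases lt_trichotomy γ γ₁ with h | h | h
    · have := hmono γ γ₁ hγ h; rw [hFγ, hFγ₁] at this; exact absurd this (lt_irrefl 0)
    · exact h
    · have := hmono γ₁ γ hγ₁0 h; rw [hFγ, hFγ₁] at this; exact absurd this (lt_irrefl 0)
  · intro γ hγ hlt
    rw [hderiv γ hγ]
    apply div_neg_of_neg_of_pos
    · have := hmono γ γ₁ hγ hlt; rw [hFγ₁] at this; exact this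
    · positivity
  · intro γ hlt
    have hγ : 0 < γ := hγ₁0.trans hlt
    rw [hderiv γ hγ]
    apply div_pos
    · have := hmono γ₁ γ hγ₁0 hlt; rw [hFγ₁] at this; exact this
    · positivity
end

section
/- (Theorem 2, global minimum) Let all parameters be positive reals with ε ∈ (0,1) and L = log₂(1/ε), and let C be the total cost with linear computational cost. Let γ₁ > 0 be the unique positive zero of C′. Then γ₁ is the unique strict global minimizer of C on (0,∞): for every γ > 0 with γ ≠ γ₁ one has C(γ) > C(γ₁). -/
open Real Set Filter

lemma aux_deriv16 (A B K Dc E γ : ℝ) (hγ : γ ≠ 0) :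
    HasDerivAt (fun x : ℝ => A/x^2 + B/x + K + Dc*x + E*x^2)
      ((2*E*γ^4 + Dc*γ^3 - B*γ - 2*A)/γ^3) γ := by
  have h2 : γ^2 ≠ 0 := pow_ne_zero 2 hγ
  have hd1 : HasDerivAt (fun x : ℝ => A/x^2)
      ((0 * γ^2 - A * (↑2 * γ^(2-1))) / (γ^2)^2) γ :=
    (hasDerivAt_const γ A).div (hasDerivAt_pow 2 γ) h2
  have hd2 : HasDerivAt (fun x : ℝ => B/x) ((0 * γ - B * 1) / γ^2) γ :=
    (hasDerivAt_const γ B).div (hasDerivAt_id γ) hγ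
  have hd4 : HasDerivAt (fun x : ℝ => Dc*x) (Dc * 1) γ :=
    (hasDerivAt_id γ).const_mul Dc
  have hd5 : HasDerivAt (fun x : ℝ => E*x^2) (E * (↑2 * γ^(2-1))) γ :=
    (hasDerivAt_pow 2 γ).const_mul E
  have h := (((hd1.add hd2).add (hasDerivAt_const γ K)).add hd4).add hd5
  refine h.congr_deriv ?_
  field_simp
  ring

lemma aux_min16 (C g : ℝ → ℝ) (hgc : Continuous g)
    (hder : ∀ x : ℝ, 0 < x → deriv C x = g x / x^3)
    (hdiff : ∀ x : ℝ, 0 < x → DifferentiableAt ℝ C x)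
    (γ₁ : ℝ) (hγ₁ : 0 < γ₁)
    (huniq : ∀ x : ℝ, 0 < x → g x = 0 → x = γ₁)
    (t : ℝ) (ht0 : 0 < t) (ht1 : t < γ₁) (hgt : g t < 0)
    (M : ℝ) (hM1 : γ₁ < M) (hgM : 0 < g M) :
    ∀ γ : ℝ, 0 < γ → γ ≠ γ₁ → C γ₁ < C γ := by
  have hneg : ∀ x : ℝ, 0 < x → x < γ₁ → g x < 0 := by
    intro x hx hxlt
    by_contra h
    push_neg at h
    rcases lt_or_eq_of_le h with h' | h'
    · have h0 : (0:ℝ) ∈ uIcc (g t) (g x) := by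
        rw [mem_uIcc]; left; constructor <;> linarith
      obtain ⟨c, hc, hgc0⟩ := intermediate_value_uIcc (hgc.continuousOn) h0
      rw [mem_uIcc] at hc
      have hc0 : 0 < c := by rcases hc with ⟨h1, _⟩ | ⟨h1, _⟩ <;> linarith
      have hclt : c < γ₁ := by rcases hc with ⟨_, h2⟩ | ⟨_, h2⟩ <;> linarith
      have := huniq c hc0 hgc0
      linarith
    · have := huniq x hx h'.symm
      linarith
  have hpos : ∀ x : ℝ, γ₁ < x → 0 < g x := by
    intro x hxgt
    by_contra h
    push_neg at h
    rcases lt_or_eq_of_le h with h' | h'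
    · have h0 : (0:ℝ) ∈ uIcc (g x) (g M) := by
        rw [mem_uIcc]; left; constructor <;> linarith
      obtain ⟨c, hc, hgc0⟩ := intermediate_value_uIcc (hgc.continuousOn) h0
      rw [mem_uIcc] at hc
      have hcgt : γ₁ < c := by rcases hc with ⟨h1, _⟩ | ⟨h1, _⟩ <;> linarith
      have := huniq c (lt_trans hγ₁ hcgt) hgc0
      linarith
    · have := huniq x (lt_trans hγ₁ hxgt) h'
      linarith
  have hanti : StrictAntiOn C (Ioc 0 γ₁) := by
    apply strictAntiOn_of_deriv_neg (convex_Ioc 0 γ₁)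
    · intro x hx
      exact (hdiff x hx.1).continuousAt.continuousWithinAt
    · intro x hx
      rw [interior_Ioc] at hx
      rw [hder x hx.1]
      exact div_neg_of_neg_of_pos (hneg x hx.1 hx.2) (pow_pos hx.1 3)
  have hmono : StrictMonoOn C (Ici γ₁) := by
    apply strictMonoOn_of_deriv_pos (convex_Ici γ₁)
    · intro x hx
      exact (hdiff x (lt_of_lt_of_le hγ₁ hx)).continuousAt.continuousWithinAt
    · intro x hx
      rw [interior_Ici] at hx
      rw [hder x (lt_trans hγ₁ hx)]
      exact div_pos (hpos x hx) (pow_pos (lt_trans hγ₁ hx) 3)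
  intro γ hγ hne
  rcases lt_or_gt_of_ne hne with h | h
  · exact hanti ⟨hγ, le_of_lt h⟩ ⟨hγ₁, le_refl _⟩ h
  · exact hmono (mem_Ici.mpr (le_refl _)) (mem_Ici.mpr (le_of_lt h)) h

lemma aux_small16 (A B Dc E γ₁ : ℝ) (hA : 0 < A) (hDc : 0 < Dc) (hE : 0 < E)
    (hγ₁ : 0 < γ₁) :
    ∃ t, 0 < t ∧ t < γ₁ ∧ 2*E*t^4 + Dc*t^3 - B*t - 2*A < 0 := by
  have hS : 0 < 2*E + Dc + |B| := by
    have := abs_nonneg B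
    linarith
  refine ⟨min (γ₁/2) (min 1 (A/(2*E + Dc + |B|))), ?_, ?_, ?_⟩
  · exact lt_min (by linarith) (lt_min one_pos (div_pos hA hS))
  · exact lt_of_le_of_lt (min_le_left _ _) (by linarith)
  · set t := min (γ₁/2) (min 1 (A/(2*E + Dc + |B|))) with htdef
    have ht0 : 0 < t := lt_min (by linarith) (lt_min one_pos (div_pos hA hS))
    have htle1 : t ≤ 1 := le_trans (min_le_right _ _) (min_le_left _ _)
    have htleAS : t ≤ A/(2*E + Dc + |B|) := le_trans (min_le_right _ _) (min_le_right _ _)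
    have hSt : (2*E + Dc + |B|) * t ≤ A := by
      rw [le_div_iff₀ hS] at htleAS
      linarith [htleAS]
    have ht4 : t^4 ≤ t := by
      calc t^4 = t^3 * t := by ring
        _ ≤ 1 * t := mul_le_mul_of_nonneg_right (pow_le_one₀ ht0.le htle1) ht0.le
        _ = t := one_mul t
    have ht3 : t^3 ≤ t := by
      calc t^3 = t^2 * t := by ring
        _ ≤ 1 * t := mul_le_mul_of_nonneg_right (pow_le_one₀ ht0.le htle1) ht0.le
        _ = t := one_mul t
    have hBabs : -(B*t) ≤ |B| * t := by
      have h1 : -B ≤ |B| := neg_le_abs B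
      nlinarith
    nlinarith [mul_le_mul_of_nonneg_left ht4 (le_of_lt hE),
      mul_le_mul_of_nonneg_left ht3 (le_of_lt hDc)]

lemma aux_large16 (A B Dc E γ₁ : ℝ) (hA : 0 < A) (hDc : 0 < Dc) (hE : 0 < E)
    (hγ₁ : 0 < γ₁) :
    ∃ M, γ₁ < M ∧ 0 < 2*E*M^4 + Dc*M^3 - B*M - 2*A := by
  set M := max γ₁ (max 1 ((|B|+2*A)/(2*E))) + 1 with hMdef
  have hM1 : γ₁ < M := by
    have := le_max_left γ₁ (max 1 ((|B|+2*A)/(2*E)))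
    rw [hMdef]; linarith
  have hMg1 : 1 < M := by
    have h1 := le_trans (le_max_left 1 ((|B|+2*A)/(2*E))) (le_max_right γ₁ _)
    rw [hMdef]; linarith
  have hM0 : 0 < M := lt_trans one_pos hMg1
  have hMr : |B| + 2*A < 2*E*M := by
    have h1 := le_trans (le_max_right 1 ((|B|+2*A)/(2*E))) (le_max_right γ₁ _)
    have h2 : (|B|+2*A)/(2*E) < M := by rw [hMdef]; linarith
    rw [div_lt_iff₀ (by linarith)] at h2
    linarith
  refine ⟨M, hM1, ?_⟩
  have h13 : 1 ≤ M^3 := one_le_pow₀ hMg1.le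
  have hM3 : M ≤ M^3 := by
    calc M = 1 * M := (one_mul M).symm
      _ ≤ M^2 * M := mul_le_mul_of_nonneg_right (one_le_pow₀ hMg1.le) hM0.le
      _ = M^3 := by ring
  have hBle : B ≤ |B| := le_abs_self B
  have key : 0 < (2*E*M - (|B|+2*A)) * M^3 :=
    mul_pos (by linarith) (pow_pos hM0 3)
  nlinarith [abs_nonneg B, mul_le_mul_of_nonneg_left hM3 (abs_nonneg B),
    mul_le_mul_of_nonneg_right hBle (le_of_lt hM0)]

lemma aux_main16 (A B K Dc E : ℝ) (hA : 0 < A) (hDc : 0 < Dc) (hE : 0 < E)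
    (C : ℝ → ℝ)
    (hCeq : ∀ x : ℝ, x ≠ 0 → C x = A/x^2 + B/x + K + Dc*x + E*x^2)
    (γ₁ : ℝ) (hγ₁ : 0 < γ₁) (hcrit : deriv C γ₁ = 0)
    (huniq : ∀ γ : ℝ, 0 < γ → deriv C γ = 0 → γ = γ₁) :
    ∀ γ : ℝ, 0 < γ → γ ≠ γ₁ → C γ₁ < C γ := by
  have hgc : Continuous (fun x : ℝ => 2*E*x^4 + Dc*x^3 - B*x - 2*A) := by fun_prop
  have hev : ∀ x : ℝ, 0 < x → C =ᶠ[nhds x] fun y => A/y^2 + B/y + K + Dc*y + E*y^2 := by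
    intro x hx
    filter_upwards [compl_singleton_mem_nhds (ne_of_gt hx)] with y hy
    exact hCeq y hy
  have hhd : ∀ x : ℝ, 0 < x →
      HasDerivAt C ((2*E*x^4 + Dc*x^3 - B*x - 2*A) / x^3) x := by
    intro x hx
    exact (aux_deriv16 A B K Dc E x (ne_of_gt hx)).congr_of_eventuallyEq (hev x hx)
  have hder : ∀ x : ℝ, 0 < x →
      deriv C x = (2*E*x^4 + Dc*x^3 - B*x - 2*A) / x^3 := fun x hx => (hhd x hx).deriv
  have hdiff : ∀ x : ℝ, 0 < x → DifferentiableAt ℝ C x :=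
    fun x hx => (hhd x hx).differentiableAt
  have huniq' : ∀ x : ℝ, 0 < x → 2*E*x^4 + Dc*x^3 - B*x - 2*A = 0 → x = γ₁ := by
    intro x hx hgx
    apply huniq x hx
    rw [hder x hx, hgx, zero_div]
  obtain ⟨t, ht0, ht1, hgt⟩ := aux_small16 A B Dc E γ₁ hA hDc hE hγ₁
  obtain ⟨M, hM1, hgM⟩ := aux_large16 A B Dc E γ₁ hA hDc hE hγ₁
  exact aux_min16 C (fun x => 2*E*x^4 + Dc*x^3 - B*x - 2*A) hgc hder hdiff γ₁ hγ₁
    huniq' t ht0 ht1 hgt M hM1 hgM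

theorem stmt16 (m₀ n₀ d κ ω θ τ β ε L : ℝ)
    (hm : 1 < m₀) (hn : 0 < n₀) (hd : 0 < d) (hκ : 0 < κ) (hω : 0 < ω) (hθ : 0 < θ)
    (hτ : 0 < τ) (hβ : 0 < β)
    (hε : 0 < ε) (hε1 : ε < 1) (hL : L = Real.logb 2 (1/ε))
    (C : ℝ → ℝ)
    (hC : C = fun γ => 2*ω*θ*(m₀/γ - 1)*((1 + κ/(n₀*γ))*L) + θ*(m₀ - m₀/γ)*n₀*d
      + β*γ*τ*n₀*(m₀ + γ)*((1 + κ/(n₀*γ))*L))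
    (γ₁ : ℝ) (hγ₁ : 0 < γ₁) (hcrit : deriv C γ₁ = 0)
    (huniq : ∀ γ : ℝ, 0 < γ → deriv C γ = 0 → γ = γ₁) :
    ∀ γ : ℝ, 0 < γ → γ ≠ γ₁ → C γ₁ < C γ := by
  have hm0 : 0 < m₀ := lt_trans one_pos hm
  have hn' : n₀ ≠ 0 := ne_of_gt hn
  have hLpos : 0 < L := by
    rw [hL]
    exact Real.logb_pos one_lt_two ((one_lt_div hε).mpr (by linarith))
  have hA : (0:ℝ) < 2*ω*θ*L*m₀*κ/n₀ := by positivity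
  have hDc : (0:ℝ) < β*τ*n₀*L*m₀ + β*τ*L*κ := by positivity
  have hE : (0:ℝ) < β*τ*n₀*L := by positivity
  have hCeq : ∀ x : ℝ, x ≠ 0 → C x = (2*ω*θ*L*m₀*κ/n₀)/x^2
      + (2*ω*θ*L*m₀ - 2*ω*θ*L*κ/n₀ - θ*n₀*d*m₀)/x
      + (-(2*ω*θ*L) + θ*n₀*d*m₀ + β*τ*L*κ*m₀)
      + (β*τ*n₀*L*m₀ + β*τ*L*κ)*x + (β*τ*n₀*L)*x^2 := by
    intro x hx
    rw [hC]
    field_simp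
    ring
  exact aux_main16 (2*ω*θ*L*m₀*κ/n₀) (2*ω*θ*L*m₀ - 2*ω*θ*L*κ/n₀ - θ*n₀*d*m₀)
    (-(2*ω*θ*L) + θ*n₀*d*m₀ + β*τ*L*κ*m₀) (β*τ*n₀*L*m₀ + β*τ*L*κ) (β*τ*n₀*L)
    hA hDc hE C hCeq γ₁ hγ₁ hcrit huniq
end

section
/- Let all parameters be positive reals with ε ∈ (0,1) and L = log₂(1/ε), let C be the total cost with linear computational cost, and let γ₁ > 0 be the unique positive zero of C′. If γ₁ < 1, then C is strictly increasing on [1, m₀], and hence the minimum of C over [1, m₀] is attained at γ = 1 and nowhere else. -/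
open Real Set Filter


private lemma stmt17_quartic_pos (D3 a3 a1 a0 y : ℝ) (hD : 0 < D3) (ha3 : 0 < a3)
    (ha0 : 0 < a0) (hy : max 1 ((|a1| + 2*a0 + 1)/(2*D3)) ≤ y) :
    0 < 2*D3*y^4 + a3*y^3 - a1*y - 2*a0 := by
  have hy1 : (1:ℝ) ≤ y := le_trans (le_max_left _ _) hy
  have hy0 : (0:ℝ) ≤ y := by linarith
  have hy2 : |a1| + 2*a0 + 1 ≤ 2*D3*y := by
    have h := le_trans (le_max_right 1 ((|a1| + 2*a0 + 1)/(2*D3))) hy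
    rw [div_le_iff₀ (by positivity)] at h
    linarith
  have hq : y ≤ y^2 := by nlinarith [mul_nonneg hy0 (sub_nonneg.mpr hy1)]
  have hy3 : y ≤ y^3 := by nlinarith [mul_le_mul_of_nonneg_left hq hy0]
  have hy31 : (1:ℝ) ≤ y^3 := le_trans hy1 hy3
  have habs : a1 ≤ |a1| := le_abs_self _
  have habs0 : (0:ℝ) ≤ |a1| := abs_nonneg _
  have key : (|a1| + 2*a0 + 1) * y^3 ≤ 2*D3*y^4 := by
    nlinarith [mul_le_mul_of_nonneg_right hy2 (by positivity : (0:ℝ) ≤ y^3)]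
  nlinarith [mul_pos ha3 (by positivity : (0:ℝ) < y^3),
    mul_le_mul_of_nonneg_left hy3 habs0,
    mul_le_mul_of_nonneg_left hy31 ha0.le,
    mul_le_mul_of_nonneg_right habs hy0]

theorem stmt17 (m₀ n₀ d κ ω θ τ β ε L : ℝ)
    (hm : 1 < m₀) (hn : 0 < n₀) (hd : 0 < d) (hκ : 0 < κ) (hω : 0 < ω) (hθ : 0 < θ)
    (hτ : 0 < τ) (hβ : 0 < β)
    (hε : 0 < ε) (hε1 : ε < 1) (hL : L = Real.logb 2 (1/ε))
    (C : ℝ → ℝ)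
    (hC : C = fun γ => 2*ω*θ*(m₀/γ - 1)*((1 + κ/(n₀*γ))*L) + θ*(m₀ - m₀/γ)*n₀*d
      + β*γ*τ*n₀*(m₀ + γ)*((1 + κ/(n₀*γ))*L))
    (γ₁ : ℝ) (hγ₁ : 0 < γ₁) (hcrit : deriv C γ₁ = 0)
    (huniq : ∀ γ : ℝ, 0 < γ → deriv C γ = 0 → γ = γ₁) (hlt : γ₁ < 1) :
    StrictMonoOn C (Set.Icc 1 m₀) ∧
    ∀ γ ∈ Set.Icc (1:ℝ) m₀, γ ≠ 1 → C 1 < C γ := by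
  have hL0 : 0 < L := by
    rw [hL]
    exact Real.logb_pos one_lt_two (one_lt_one_div hε hε1)
  have hm0 : 0 < m₀ := lt_trans zero_lt_one hm
  set A := 2*ω*θ*L with hA
  set B := θ*n₀*d*m₀ with hB
  set D := β*τ*n₀*L with hD
  set c := κ/n₀ with hc
  have hApos : 0 < A := by rw [hA]; positivity
  have hBpos : 0 < B := by rw [hB]; positivity
  have hDpos : 0 < D := by rw [hD]; positivity
  have hcpos : 0 < c := by rw [hc]; positivity
  set N : ℝ → ℝ := fun y => D*y^4 + D*(m₀+c)*y^3 + (D*m₀*c - A + B)*y^2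
      + (A*(m₀-c)-B)*y + A*m₀*c with hNdef
  set Pp : ℝ → ℝ := fun y => 2*D*y^4 + D*(m₀+c)*y^3 - (A*(m₀-c)-B)*y - 2*(A*m₀*c) with hPdef
  have hn0 : n₀ ≠ 0 := ne_of_gt hn
  have hCN : ∀ x : ℝ, 0 < x → C x = N x / x^2 := by
    intro x hx
    have hx0 : x ≠ 0 := ne_of_gt hx
    simp only [hC, hNdef, hA, hB, hD, hc]
    field_simp
    ring
  have hCd : ∀ x : ℝ, 0 < x → HasDerivAt C (Pp x / x^3) x := by
    intro x hx
    have hx0 : x ≠ 0 := ne_of_gt hx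
    have h4 := (hasDerivAt_pow 4 x).const_mul D
    have h3 := (hasDerivAt_pow 3 x).const_mul (D*(m₀+c))
    have h2 := (hasDerivAt_pow 2 x).const_mul (D*m₀*c - A + B)
    have h1 := (hasDerivAt_id x).const_mul (A*(m₀-c)-B)
    have h0 := hasDerivAt_const x (A*m₀*c)
    have hNd : HasDerivAt N
        (4*D*x^3 + 3*(D*(m₀+c))*x^2 + 2*(D*m₀*c - A + B)*x + (A*(m₀-c)-B)) x := by
      have h := (((h4.add h3).add h2).add h1).add h0
      refine h.congr_deriv ?_
      push_cast
      ring
    have hden : HasDerivAt (fun y : ℝ => y^2) (2*x) x := by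
      simpa using hasDerivAt_pow 2 x
    have hdiv := hNd.div hden (by positivity)
    have heq : C =ᶠ[nhds x] fun y => N y / y^2 := by
      filter_upwards [Ioi_mem_nhds hx] with y hy
      exact hCN y hy
    have hfin := hdiv.congr_of_eventuallyEq heq
    refine hfin.congr_deriv ?_
    simp only [hPdef, hNdef]
    field_simp
    ring
  have hzero : ∀ x : ℝ, 0 < x → Pp x = 0 → x = γ₁ := by
    intro x hx h
    exact huniq x hx (by rw [(hCd x hx).deriv, h, zero_div])
  set M : ℝ := max 1 ((|A*(m₀-c)-B| + 2*(A*m₀*c) + 1)/(2*D)) with hM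
  have hM1 : (1:ℝ) ≤ M := le_max_left _ _
  have hbig : ∀ y : ℝ, M ≤ y → 0 < Pp y := by
    intro y hy
    rw [hPdef]
    exact stmt17_quartic_pos D (D*(m₀+c)) (A*(m₀-c)-B) (A*m₀*c) y hDpos
      (by positivity) (by positivity) hy
  have hpos : ∀ x : ℝ, γ₁ < x → 0 < Pp x := by
    intro x hx
    have hx0 : 0 < x := lt_trans hγ₁ hx
    rcases lt_trichotomy (Pp x) 0 with h | h | h
    · exfalso
      set M' : ℝ := max M x with hM'
      have hPM : 0 < Pp M' := hbig _ (le_max_left _ _)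
      have hxM : x ≤ M' := le_max_right _ _
      have hcont : ContinuousOn Pp (Icc x M') := by
        simp only [hPdef]
        fun_prop
      obtain ⟨z, hz, hz0⟩ := intermediate_value_Icc hxM hcont ⟨h.le, hPM.le⟩
      have hzγ : z = γ₁ := hzero z (lt_of_lt_of_le hx0 hz.1) hz0
      have : x ≤ γ₁ := hzγ ▸ hz.1
      linarith
    · exact absurd (hzero x hx0 h) (by intro he; rw [he] at hx; exact lt_irrefl _ hx)
    · exact h
  have hmono : StrictMonoOn C (Set.Icc 1 m₀) := by
    apply strictMonoOn_of_deriv_pos (convex_Icc 1 m₀)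
    · intro x hx
      exact ((hCd x (lt_of_lt_of_le zero_lt_one hx.1)).continuousAt).continuousWithinAt
    · intro x hx
      rw [interior_Icc] at hx
      have hx0 : 0 < x := by linarith [hx.1]
      rw [(hCd x hx0).deriv]
      exact div_pos (hpos x (lt_trans hlt hx.1)) (by positivity)
  refine ⟨hmono, ?_⟩
  intro γ hγ hne
  exact hmono (left_mem_Icc.mpr hm.le) hγ (lt_of_le_of_ne hγ.1 (Ne.symm hne))
end

section
/- Let all parameters be positive reals with ε ∈ (0,1) and L = log₂(1/ε), let C be the total cost with linear computational cost, and let γ₁ > 0 be the unique positive zero of C′. If γ₁ > m₀, then C is strictly decreasing on [1, m₀], and hence the minimum of C over [1, m₀] is attained at γ = m₀ and nowhere else. -/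
open Real Set Filter Topology

/-!
Away from `0` the cost is a Laurent polynomial `a₀ + a₁ γ + a₂ γ² + b₁ / γ + b₂ / γ²` with
`b₂ = 2ωθLm₀κ/n₀ > 0`, so `C' γ → -∞` as `γ → 0⁺`. By Darboux's theorem `C'` keeps a constant
sign on `(0, γ₁)`, where it has no zero; hence it is negative there, and `[1, m₀] ⊆ (0, γ₁)`.
-/

noncomputable def quadLaurent (a₀ a₁ a₂ b₁ b₂ x : ℝ) : ℝ :=
  a₀ + a₁ * x + a₂ * x ^ 2 + b₁ / x + b₂ / x ^ 2

section quadLaurent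

variable (a₀ a₁ a₂ b₁ b₂ : ℝ)

theorem hasDerivAt_quadLaurent {x : ℝ} (hx : x ≠ 0) :
    HasDerivAt (quadLaurent a₀ a₁ a₂ b₁ b₂)
      (a₁ + 2 * a₂ * x - b₁ / x ^ 2 - 2 * b₂ / x ^ 3) x := by
  have hQ : quadLaurent a₀ a₁ a₂ b₁ b₂ = fun y => a₀ + a₁ * y + a₂ * y ^ 2 + b₁ * y⁻¹
      + b₂ * (y ^ 2)⁻¹ := by
    funext y; simp only [quadLaurent, div_eq_mul_inv]
  rw [hQ]
  refine (((((hasDerivAt_const x a₀).add ((hasDerivAt_id' x).const_mul a₁)).add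
    ((hasDerivAt_pow 2 x).const_mul a₂)).add ((hasDerivAt_inv hx).const_mul b₁)).add
    (((hasDerivAt_pow 2 x).inv (pow_ne_zero 2 hx)).const_mul b₂)).congr_deriv ?_
  field_simp
  ring

theorem eventually_deriv_quadLaurent_neg {b₂ : ℝ} (hb₂ : 0 < b₂) :
    ∀ᶠ x in 𝓝[>] 0, deriv (quadLaurent a₀ a₁ a₂ b₁ b₂) x < 0 := by
  have hnum : Tendsto (fun x : ℝ => a₁ * x ^ 3 + 2 * a₂ * x ^ 4 - b₁ * x - 2 * b₂) (𝓝[>] 0)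
      (𝓝 (-(2 * b₂))) := by
    have : Continuous (fun x : ℝ => a₁ * x ^ 3 + 2 * a₂ * x ^ 4 - b₁ * x - 2 * b₂) := by
      fun_prop
    simpa using (this.tendsto 0).mono_left nhdsWithin_le_nhds
  filter_upwards [hnum.eventually (gt_mem_nhds (neg_neg_of_pos (by positivity))),
    self_mem_nhdsWithin] with x hneg (hx : 0 < x)
  rw [(hasDerivAt_quadLaurent a₀ a₁ a₂ b₁ b₂ hx.ne').deriv]
  have : a₁ + 2 * a₂ * x - b₁ / x ^ 2 - 2 * b₂ / x ^ 3
      = (a₁ * x ^ 3 + 2 * a₂ * x ^ 4 - b₁ * x - 2 * b₂) / x ^ 3 := by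
    field_simp
  rw [this]
  exact div_neg_of_neg_of_pos hneg (by positivity)

end quadLaurent

theorem strictAntiOn_of_deriv_ne_zero {f : ℝ → ℝ} {s : Set ℝ} (hs : Convex ℝ s)
    (hf : ∀ x ∈ s, DifferentiableAt ℝ f x) (hne : ∀ x ∈ s, deriv f x ≠ 0)
    (hneg : ∃ x ∈ s, deriv f x < 0) : StrictAntiOn f s := by
  obtain ⟨x, hx, hfx⟩ := hneg
  have hall : ∀ y ∈ s, deriv f y < 0 := by
    intro y hy
    by_contra! hfy
    obtain ⟨z, hz, hfz⟩ := (hs.ordConnected.image_deriv hf).out (mem_image_of_mem _ hx)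
      (mem_image_of_mem _ hy) ⟨hfx.le, hfy⟩
    exact hne z hz hfz
  exact strictAntiOn_of_deriv_neg hs (fun y hy => (hf y hy).continuousAt.continuousWithinAt)
    fun y hy => hall y (interior_subset hy)

theorem cost_eq_quadLaurent {m₀ n₀ d κ ω θ τ β L : ℝ} (hn : n₀ ≠ 0) {γ : ℝ} (hγ : γ ≠ 0) :
    2*ω*θ*(m₀/γ - 1)*((1 + κ/(n₀*γ))*L) + θ*(m₀ - m₀/γ)*n₀*d
      + β*γ*τ*n₀*(m₀ + γ)*((1 + κ/(n₀*γ))*L)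
    = quadLaurent (θ * n₀ * d * m₀ + β * τ * L * κ * m₀ - 2 * ω * θ * L)
        (β * τ * L * (n₀ * m₀ + κ)) (β * τ * L * n₀)
        (2 * ω * θ * L * (m₀ - κ / n₀) - θ * n₀ * d * m₀) (2 * ω * θ * L * m₀ * κ / n₀) γ := by
  unfold quadLaurent
  field_simp
  ring

theorem stmt19_general (m₀ n₀ d κ ω θ τ β ε L : ℝ)
    (hm : 1 < m₀) (hn : 0 < n₀) (hκ : 0 < κ) (hω : 0 < ω) (hθ : 0 < θ)
    (hε : 0 < ε) (hε1 : ε < 1) (hL : L = Real.logb 2 (1/ε))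
    (C : ℝ → ℝ)
    (hC : C = fun γ => 2*ω*θ*(m₀/γ - 1)*((1 + κ/(n₀*γ))*L) + θ*(m₀ - m₀/γ)*n₀*d
      + β*γ*τ*n₀*(m₀ + γ)*((1 + κ/(n₀*γ))*L))
    (γ₁ : ℝ) (hγ₁ : 0 < γ₁)
    (huniq : ∀ γ : ℝ, 0 < γ → deriv C γ = 0 → γ = γ₁) (hgt : m₀ < γ₁) :
    StrictAntiOn C (Set.Icc 1 m₀) ∧
    ∀ γ ∈ Set.Ico (1:ℝ) m₀, C m₀ < C γ := by
  have hL0 : 0 < L := hL ▸ Real.logb_pos one_lt_two (by rw [lt_div_iff₀ hε]; linarith)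
  set Q := quadLaurent (θ * n₀ * d * m₀ + β * τ * L * κ * m₀ - 2 * ω * θ * L)
    (β * τ * L * (n₀ * m₀ + κ)) (β * τ * L * n₀)
    (2 * ω * θ * L * (m₀ - κ / n₀) - θ * n₀ * d * m₀) (2 * ω * θ * L * m₀ * κ / n₀)
  have hCQ : ∀ x ≠ 0, C =ᶠ[𝓝 x] Q := fun x hx => (eventually_ne_nhds hx).mono fun y hy => by
    rw [hC]; exact cost_eq_quadLaurent hn.ne' hy
  have hdiff : ∀ x ∈ Ioo 0 γ₁, DifferentiableAt ℝ C x := fun x hx =>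
    ((hasDerivAt_quadLaurent _ _ _ _ _ hx.1.ne').differentiableAt).congr_of_eventuallyEq
      (hCQ x hx.1.ne')
  have hneg : ∃ x ∈ Ioo 0 γ₁, deriv C x < 0 := by
    obtain ⟨x, hQx, hx⟩ := ((eventually_deriv_quadLaurent_neg _ _ _ _
      (by positivity : 0 < 2 * ω * θ * L * m₀ * κ / n₀)).and (Ioo_mem_nhdsGT hγ₁)).exists
    exact ⟨x, hx, (hCQ x hx.1.ne').deriv_eq ▸ hQx⟩
  have hanti : StrictAntiOn C (Ioo 0 γ₁) :=
    strictAntiOn_of_deriv_ne_zero (convex_Ioo 0 γ₁) hdiff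
      (fun x hx h0 => hx.2.ne (huniq x hx.1 h0)) hneg
  have hsub : Icc 1 m₀ ⊆ Ioo 0 γ₁ := Icc_subset_Ioo (by norm_num) hgt
  exact ⟨hanti.mono hsub, fun γ hγ => hanti (hsub (Ico_subset_Icc_self hγ))
    (hsub (right_mem_Icc.2 hm.le)) hγ.2⟩

theorem stmt19 (m₀ n₀ d κ ω θ τ β ε L : ℝ)
    (hm : 1 < m₀) (hn : 0 < n₀) (hd : 0 < d) (hκ : 0 < κ) (hω : 0 < ω) (hθ : 0 < θ)
    (hτ : 0 < τ) (hβ : 0 < β)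
    (hε : 0 < ε) (hε1 : ε < 1) (hL : L = Real.logb 2 (1/ε))
    (C : ℝ → ℝ)
    (hC : C = fun γ => 2*ω*θ*(m₀/γ - 1)*((1 + κ/(n₀*γ))*L) + θ*(m₀ - m₀/γ)*n₀*d
      + β*γ*τ*n₀*(m₀ + γ)*((1 + κ/(n₀*γ))*L))
    (γ₁ : ℝ) (hγ₁ : 0 < γ₁) (hcrit : deriv C γ₁ = 0)
    (huniq : ∀ γ : ℝ, 0 < γ → deriv C γ = 0 → γ = γ₁) (hgt : m₀ < γ₁) :
    StrictAntiOn C (Set.Icc 1 m₀) ∧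
    ∀ γ ∈ Set.Ico (1:ℝ) m₀, C m₀ < C γ :=
  stmt19_general m₀ n₀ d κ ω θ τ β ε L hm hn hκ hω hθ hε hε1 hL C hC γ₁ hγ₁ huniq hgt
end
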